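/- arXiv:math/0403266 — 9 statements merged into one kernel-verified Lean document; each statement's English description precedes it below -/
import Mathlib

section
/- Suppose b, δ, h, i, p are endomorphisms/maps with i ∘ p = 1 + b∘h + h∘b, b² = 0, and (b + δ)² = 0, and (1 - δ∘h) is invertible with A = (1 - δ∘h)⁻¹ ∘ δ. Then A ∘ i ∘ p ∘ A + A ∘ b + b ∘ A = 0. -/
/-!
Write `D = δδ + δb + bδ`, which vanishes since `(b + δ)² = b² = 0`. The two push-through
identities `A = δ (1 + h A) = (1 + A h) δ` let one expand
`A (1 + b h + h b) A + A b + b A` as the sandwich `(1 + A h) D (1 + h A)`, hence it is zero.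
-/

namespace HomologicalPerturbation

variable {S : Type*} [Ring S] {b h δ A : S} {u : Sˣ}

theorem mul_self_add_mul_add_mul_eq_zero (hb : b * b = 0) (hδ : (b + δ) * (b + δ) = 0) :
    δ * δ + δ * b + b * δ = 0 := by
  calc δ * δ + δ * b + b * δ = (b + δ) * (b + δ) - b * b := by noncomm_ring
    _ = 0 := by rw [hδ, hb, sub_zero]

theorem mul_one_add_mul_eq (hu : ↑u = 1 - δ * h) (hA : A = ↑u⁻¹ * δ) :
    δ * (1 + h * A) = A := by
  have huA : ↑u * A = δ := by rw [hA, Units.mul_inv_cancel_left]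
  calc δ * (1 + h * A) = ↑u * A + δ * h * A := by rw [huA]; noncomm_ring
    _ = A := by rw [hu]; noncomm_ring

theorem one_add_mul_mul_eq (hu : ↑u = 1 - δ * h) (hA : A = ↑u⁻¹ * δ) :
    (1 + A * h) * δ = A := by
  have huA : ↑u * A = δ := by rw [hA, Units.mul_inv_cancel_left]
  refine (Units.mul_right_inj u).1 ?_
  calc ↑u * ((1 + A * h) * δ) = ↑u * δ + ↑u * A * h * δ := by noncomm_ring
    _ = ↑u * A := by rw [huA, hu]; noncomm_ring

theorem sandwich_eq (hl : (1 + A * h) * δ = A) (hr : δ * (1 + h * A) = A) :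
    A * (1 + b * h + h * b) * A + A * b + b * A
      = (1 + A * h) * (δ * δ + δ * b + b * δ) * (1 + h * A) := by
  calc A * (1 + b * h + h * b) * A + A * b + b * A
      = ((1 + A * h) * δ) * (δ * (1 + h * A)) + ((1 + A * h) * δ) * (b * (1 + h * A))
          + ((1 + A * h) * b) * (δ * (1 + h * A)) := by rw [hl, hr]; noncomm_ring
    _ = (1 + A * h) * (δ * δ + δ * b + b * δ) * (1 + h * A) := by noncomm_ring

end HomologicalPerturbation

theorem perturbation_AipA_general {R L M : Type*} [CommRing R] [AddCommGroup L] [Module R L]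
    [AddCommGroup M] [Module R M]
    (b h δ : Module.End R M)
    (i : L →ₗ[R] M) (p : M →ₗ[R] L)
    (hb : b * b = 0)
    (hip : (i ∘ₗ p : Module.End R M) = 1 + b * h + h * b)
    (hδ : (b + δ) * (b + δ) = 0)
    (u : (Module.End R M)ˣ) (hu : (u : Module.End R M) = 1 - δ * h)
    (A : Module.End R M) (hA : A = (↑u⁻¹ : Module.End R M) * δ) :
    A * (i ∘ₗ p : Module.End R M) * A + A * b + b * A = 0 := by
  open HomologicalPerturbation in
  rw [hip, sandwich_eq (one_add_mul_mul_eq hu hA) (mul_one_add_mul_eq hu hA),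
    mul_self_add_mul_add_mul_eq_zero hb hδ, mul_zero, zero_mul]

/-- With `i ∘ p = 1 + b∘h + h∘b`, `b² = 0`, `(b+δ)² = 0` and `(1 - δ∘h)` invertible,
`A = (1 - δ∘h)⁻¹ ∘ δ` satisfies `A ∘ i ∘ p ∘ A + A ∘ b + b ∘ A = 0`. -/
theorem perturbation_AipA {R L M : Type*} [CommRing R] [AddCommGroup L] [Module R L]
    [AddCommGroup M] [Module R M]
    (b h δ : Module.End R M) (bL : Module.End R L)
    (i : L →ₗ[R] M) (p : M →ₗ[R] L)
    (hb : b * b = 0)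
    (hip : (i ∘ₗ p : Module.End R M) = 1 + b * h + h * b)
    (hi : i ∘ₗ bL = b ∘ₗ i) (hp : bL ∘ₗ p = p ∘ₗ b)
    (hδ : (b + δ) * (b + δ) = 0)
    (u : (Module.End R M)ˣ) (hu : (u : Module.End R M) = 1 - δ * h)
    (A : Module.End R M) (hA : A = (↑u⁻¹ : Module.End R M) * δ) :
    A * (i ∘ₗ p : Module.End R M) * A + A * b + b * A = 0 :=
  perturbation_AipA_general b h δ i p hb hip hδ u hu A hA
end

section
/- Under the hypotheses of a homotopy equivalence data with a small perturbation δ, the perturbed differential b₁ = b_L + p ∘ A ∘ i on L satisfies b₁ ∘ b₁ = 0. -/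
/-!
Write `A = (1 - δh)⁻¹δ`, so that `(1 + Ah)δ = A = δ(1 + hA)`. Sandwiching
`bδ + δb + δ² = (b + δ)² - b² = 0` between `1 + Ah` and `1 + hA` gives the
Maurer–Cartan-type identity `bA + Ab + A(1 + bh + hb)A = 0` in `End M`. Expanding
`(b_L + pAi)²` with the chain-map relations gives `p(bA + Ab + A(ip)A)i`, and
`ip = 1 + bh + hb` turns this into the identity above.
-/

section Ring

variable {S : Type*} [Ring S]

theorem Units.inv_eq_one_add_inv_mul {u : Sˣ} {x : S} (hu : (u : S) = 1 - x) :
    (↑u⁻¹ : S) = 1 + ↑u⁻¹ * x := by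
  calc (↑u⁻¹ : S) = ↑u⁻¹ * (u + x) := by rw [hu, sub_add_cancel, mul_one]
    _ = 1 + ↑u⁻¹ * x := by rw [mul_add, Units.inv_mul]

theorem Units.inv_eq_one_add_mul_inv {u : Sˣ} {x : S} (hu : (u : S) = 1 - x) :
    (↑u⁻¹ : S) = 1 + x * ↑u⁻¹ := by
  calc (↑u⁻¹ : S) = (u + x) * ↑u⁻¹ := by rw [hu, sub_add_cancel, one_mul]
    _ = 1 + x * ↑u⁻¹ := by rw [add_mul, Units.mul_inv]

variable {b δ h : S}

theorem Units.one_add_inv_mul_mul_mul_eq {u : Sˣ} (hu : (u : S) = 1 - δ * h) :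
    (1 + ↑u⁻¹ * δ * h) * δ = ↑u⁻¹ * δ := by
  rw [mul_assoc, ← Units.inv_eq_one_add_inv_mul hu]

theorem Units.mul_one_add_mul_inv_mul_eq {u : Sˣ} (hu : (u : S) = 1 - δ * h) :
    δ * (1 + h * (↑u⁻¹ * δ)) = ↑u⁻¹ * δ := by
  calc δ * (1 + h * (↑u⁻¹ * δ)) = (1 + δ * h * ↑u⁻¹) * δ := by noncomm_ring
    _ = ↑u⁻¹ * δ := by rw [← Units.inv_eq_one_add_mul_inv hu]

theorem perturbation_maurerCartan {A : S} (hb : b * b = 0) (hδ : (b + δ) * (b + δ) = 0)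
    (hl : (1 + A * h) * δ = A) (hr : δ * (1 + h * A) = A) :
    b * A + A * b + A * (1 + b * h + h * b) * A = 0 := by
  have hbδ : b * δ + δ * b + δ * δ = 0 := by
    have hsq : (b + δ) * (b + δ) = b * b + (b * δ + δ * b + δ * δ) := by noncomm_ring
    rwa [hsq, hb, zero_add] at hδ
  calc b * A + A * b + A * (1 + b * h + h * b) * A
      = (1 + A * h) * b * (δ * (1 + h * A)) + (1 + A * h) * δ * (b * (1 + h * A))
          + (1 + A * h) * δ * (δ * (1 + h * A)) := by rw [hl, hr]; noncomm_ring
    _ = (1 + A * h) * (b * δ + δ * b + δ * δ) * (1 + h * A) := by noncomm_ring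
    _ = 0 := by rw [hbδ, mul_zero, zero_mul]

end Ring

theorem LinearMap.add_comp_comp_mul_self {R L M : Type*} [CommRing R]
    [AddCommGroup L] [Module R L] [AddCommGroup M] [Module R M]
    {b A : Module.End R M} {bL : Module.End R L} {i : L →ₗ[R] M} {p : M →ₗ[R] L}
    (hbL : bL * bL = 0) (hi : i ∘ₗ bL = b ∘ₗ i) (hp : bL ∘ₗ p = p ∘ₗ b) :
    (bL + p ∘ₗ A ∘ₗ i) * (bL + p ∘ₗ A ∘ₗ i) = p ∘ₗ (b * A + A * b + A * (i ∘ₗ p) * A) ∘ₗ i := by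
  ext x
  simp only [Module.End.mul_apply, LinearMap.add_apply, LinearMap.comp_apply, map_add]
  have hbLx : bL (bL x) = 0 := LinearMap.congr_fun hbL x
  have hix : i (bL x) = b (i x) := LinearMap.congr_fun hi x
  have hpx : bL (p (A (i x))) = p (b (A (i x))) := LinearMap.congr_fun hp _
  rw [hbLx, hix, hpx]
  abel

/-- Main perturbation lemma: the perturbed differential `b₁ = b_L + p ∘ A ∘ i`
on `L` satisfies `b₁ ∘ b₁ = 0`. -/
theorem perturbed_differential_squares_to_zero {R L M : Type*} [CommRing R]
    [AddCommGroup L] [Module R L] [AddCommGroup M] [Module R M]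
    (b h δ : Module.End R M) (bL : Module.End R L)
    (i : L →ₗ[R] M) (p : M →ₗ[R] L)
    (hbL : bL * bL = 0) (hb : b * b = 0)
    (hip : (i ∘ₗ p : Module.End R M) = 1 + b * h + h * b)
    (hi : i ∘ₗ bL = b ∘ₗ i) (hp : bL ∘ₗ p = p ∘ₗ b)
    (hδ : (b + δ) * (b + δ) = 0)
    (u : (Module.End R M)ˣ) (hu : (u : Module.End R M) = 1 - δ * h)
    (A : Module.End R M) (hA : A = (↑u⁻¹ : Module.End R M) * δ)
    (b₁ : Module.End R L) (hb₁ : b₁ = bL + p ∘ₗ A ∘ₗ i) :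
    b₁ * b₁ = 0 := by
  have hl : (1 + A * h) * δ = A := hA ▸ Units.one_add_inv_mul_mul_mul_eq hu
  have hr : δ * (1 + h * A) = A := hA ▸ Units.mul_one_add_mul_inv_mul_eq hu
  rw [hb₁, LinearMap.add_comp_comp_mul_self hbL hi hp, hip,
    perturbation_maurerCartan hb hδ hl hr, LinearMap.zero_comp, LinearMap.comp_zero]
end

section
/- Under the hypotheses of a homotopy equivalence data with a small perturbation δ, the map p₁ = p + p ∘ A ∘ h is a chain map from (M, b + δ) to (L, b₁), i.e. b₁ ∘ p₁ = p₁ ∘ (b + δ). -/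
/-!
Write `A = (1 - δh)⁻¹δ`, so that `A = δ + δhA = δ + Ahδ`. Multiplying
`bA + Ab + A(1 + bh + hb)A` on the left by the unit `1 - δh` and using `A = δ(1 + hA)`
collapses it to `(bδ + δb + δ²)(1 + hA)`, which vanishes because `(b + δ)² = b² = 0`.
Consequently `(b + A(1 + bh + hb))(1 + Ah) = (1 + Ah)(b + δ)`, the difference being
`(bA + Ab + A(1 + bh + hb)A)h + (A(1 - hδ) - δ)`. Now `p₁ = p(1 + Ah)`, and `ip = 1 + bh + hb`
together with `bL p = p b` give `b₁ p = p(b + A ip)`.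
-/

section PerturbationAlgebra

variable {S : Type*} [Ring S] {b h δ A : S}

theorem Units.inv_mul_mul_one_sub_mul (u : Sˣ) (hu : (u : S) = 1 - δ * h) :
    ↑u⁻¹ * δ * (1 - h * δ) = δ := by
  have hδu : δ * (1 - h * δ) = ↑u * δ := by rw [hu]; noncomm_ring
  rw [mul_assoc, hδu, Units.inv_mul_cancel_left]

theorem perturbation_curvature_eq_zero (hb : b * b = 0) (hδ : (b + δ) * (b + δ) = 0)
    (u : Sˣ) (hu : (u : S) = 1 - δ * h) (hA : ↑u * A = δ) :
    b * A + A * b + A * (1 + b * h + h * b) * A = 0 := by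
  have hAδ : A - δ * (1 + h * A) = 0 := by
    calc A - δ * (1 + h * A) = ↑u * A - δ := by rw [hu]; noncomm_ring
      _ = 0 := by rw [hA, sub_self]
  rw [← Units.mul_right_inj u]
  calc ↑u * (b * A + A * b + A * (1 + b * h + h * b) * A)
      = (1 - δ * h) * b * A + (↑u * A) * b + (↑u * A) * (1 + b * h + h * b) * A := by
        rw [hu]; noncomm_ring
    _ = ((b + δ) * (b + δ) - b * b) * (1 + h * A) + (b + δ) * (A - δ * (1 + h * A)) := by
        rw [hA]; noncomm_ring
    _ = ↑u * 0 := by rw [hb, hδ, hAδ]; simp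

theorem perturbation_semiconjBy (hb : b * b = 0) (hδ : (b + δ) * (b + δ) = 0)
    (u : Sˣ) (hu : (u : S) = 1 - δ * h) (hA : A = ↑u⁻¹ * δ) :
    SemiconjBy (1 + A * h) (b + δ) (b + A * (1 + b * h + h * b)) := by
  have hA_left : ↑u * A = δ := by rw [hA, Units.mul_inv_cancel_left]
  have hA_right : A * (1 - h * δ) = δ := hA ▸ u.inv_mul_mul_one_sub_mul hu
  rw [SemiconjBy, eq_comm, ← sub_eq_zero]
  calc _ = (b * A + A * b + A * (1 + b * h + h * b) * A) * h + (A * (1 - h * δ) - δ) := by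
        noncomm_ring
    _ = 0 := by rw [perturbation_curvature_eq_zero hb hδ u hu hA_left, hA_right]; simp

end PerturbationAlgebra

theorem perturbed_p_is_chain_map_general {R L M : Type*} [CommRing R]
    [AddCommGroup L] [Module R L] [AddCommGroup M] [Module R M]
    (b h δ : Module.End R M) (bL : Module.End R L)
    (i : L →ₗ[R] M) (p : M →ₗ[R] L)
    (hb : b * b = 0)
    (hip : (i ∘ₗ p : Module.End R M) = 1 + b * h + h * b)
    (hp : bL ∘ₗ p = p ∘ₗ b)
    (hδ : (b + δ) * (b + δ) = 0)
    (u : (Module.End R M)ˣ) (hu : (u : Module.End R M) = 1 - δ * h)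
    (A : Module.End R M) (hA : A = (↑u⁻¹ : Module.End R M) * δ)
    (b₁ : Module.End R L) (hb₁ : b₁ = bL + p ∘ₗ A ∘ₗ i)
    (p₁ : M →ₗ[R] L) (hp₁ : p₁ = p + p ∘ₗ A ∘ₗ h) :
    b₁ ∘ₗ p₁ = p₁ ∘ₗ (b + δ) := by
  have key := (perturbation_semiconjBy hb hδ u hu hA).eq
  rw [← hip] at key
  subst hb₁ hp₁
  calc _ = p ∘ₗ ((b + A * (i ∘ₗ p)) * (1 + A * h)) := by
        ext x
        simp [← LinearMap.comp_apply bL p, hp, add_assoc]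
    _ = p ∘ₗ ((1 + A * h) * (b + δ)) := by rw [key]
    _ = _ := by
        ext x
        simp

/-- Main perturbation lemma: `p₁ = p + p ∘ A ∘ h` is a chain map from `(M, b + δ)`
to `(L, b₁)`, i.e. `b₁ ∘ p₁ = p₁ ∘ (b + δ)`. -/
theorem perturbed_p_is_chain_map {R L M : Type*} [CommRing R]
    [AddCommGroup L] [Module R L] [AddCommGroup M] [Module R M]
    (b h δ : Module.End R M) (bL : Module.End R L)
    (i : L →ₗ[R] M) (p : M →ₗ[R] L)
    (hbL : bL * bL = 0) (hb : b * b = 0)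
    (hip : (i ∘ₗ p : Module.End R M) = 1 + b * h + h * b)
    (hi : i ∘ₗ bL = b ∘ₗ i) (hp : bL ∘ₗ p = p ∘ₗ b)
    (hδ : (b + δ) * (b + δ) = 0)
    (u : (Module.End R M)ˣ) (hu : (u : Module.End R M) = 1 - δ * h)
    (A : Module.End R M) (hA : A = (↑u⁻¹ : Module.End R M) * δ)
    (b₁ : Module.End R L) (hb₁ : b₁ = bL + p ∘ₗ A ∘ₗ i)
    (p₁ : M →ₗ[R] L) (hp₁ : p₁ = p + p ∘ₗ A ∘ₗ h) :
    b₁ ∘ₗ p₁ = p₁ ∘ₗ (b + δ) :=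
  perturbed_p_is_chain_map_general b h δ bL i p hb hip hp hδ u hu A hA b₁ hb₁ p₁ hp₁
end

section
/- Under the hypotheses of a homotopy equivalence data with a small perturbation δ, with i₁ = i + hAi, p₁ = p + pAh, h₁ = h + hAh, one has i₁ ∘ p₁ = 1 + h₁ ∘ (b + δ) + (b + δ) ∘ h₁. -/
/-!
Put `P = 1 + b h + h b` and `A = (1 - δ h)⁻¹ δ`, so that `A = δ + δ h A = δ + A h δ`.
These two equations say that `1 - δ h` has left inverse `1 + A h` and `1 - h δ` has right
inverse `1 + h A`. Sandwiching `E = A b + b A + A P A` between `1 - δ h` and `1 - h δ` turns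
every `A` into `δ` and gives `δ b + b δ + δ² = (b + δ)² - b² = 0`, hence `E = 0`.
Since `i₁ p₁ = (1 + h A) P (1 + A h)`, the homotopy formula for `h₁ = h + h A h` is then a
ring identity modulo the two equations for `A` and `E = 0`.
-/

section PerturbationAlgebra

variable {S : Type*} [Ring S] {b h δ A : S}

theorem Units.inv_mul_eq_add_mul_mul_inv_mul (u : Sˣ) (hu : (u : S) = 1 - δ * h) :
    ↑u⁻¹ * δ = δ + δ * h * (↑u⁻¹ * δ) := by
  have hδ : (1 - δ * h) * (↑u⁻¹ * δ) = δ := by rw [← hu]; exact u.mul_inv_cancel_left δ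
  linear_combination (norm := noncomm_ring) hδ

theorem Units.inv_mul_eq_add_inv_mul_mul (u : Sˣ) (hu : (u : S) = 1 - δ * h) :
    ↑u⁻¹ * δ = δ + ↑u⁻¹ * δ * h * δ := by
  have hcomm : δ * (1 - h * δ) = u * δ := by rw [hu]; noncomm_ring
  have hδ : ↑u⁻¹ * δ * (1 - h * δ) = δ := by
    rw [mul_assoc, hcomm, u.inv_mul_cancel_left]
  linear_combination (norm := noncomm_ring) hδ

theorem add_mul_add_mul_mul_eq_zero_of_perturbation
    (hb : b * b = 0) (hδ : (b + δ) * (b + δ) = 0)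
    (hl : A = δ + δ * h * A) (hr : A = δ + A * h * δ) :
    A * b + b * A + A * (1 + b * h + h * b) * A = 0 := by
  set E := A * b + b * A + A * (1 + b * h + h * b) * A with hE
  have hleft : (1 + A * h) * (1 - δ * h) = 1 := by
    linear_combination (norm := noncomm_ring) hr * h
  have hright : (1 - h * δ) * (1 + h * A) = 1 := by
    linear_combination (norm := noncomm_ring) h * hl
  have hsandwich : (1 - δ * h) * E * (1 - h * δ) = 0 := by
    rw [hE]
    linear_combination (norm := noncomm_ring)
      hl * (b * (1 - h * δ)) + ((1 - δ * h) * b) * hr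
        + hl * ((1 + b * h + h * b) * A * (1 - h * δ)) + (δ * (1 + b * h + h * b)) * hr
        + hδ - hb
  calc E = (1 + A * h) * (1 - δ * h) * E * ((1 - h * δ) * (1 + h * A)) := by
        rw [hleft, hright, one_mul, mul_one]
    _ = (1 + A * h) * ((1 - δ * h) * E * (1 - h * δ)) * (1 + h * A) := by
        simp only [mul_assoc]
    _ = 0 := by rw [hsandwich, mul_zero, zero_mul]

theorem one_add_mul_mul_one_add_eq_of_perturbation
    (hb : b * b = 0) (hδ : (b + δ) * (b + δ) = 0)
    (hl : A = δ + δ * h * A) (hr : A = δ + A * h * δ) :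
    (1 + h * A) * (1 + b * h + h * b) * (1 + A * h) =
      1 + (h + h * A * h) * (b + δ) + (b + δ) * (h + h * A * h) := by
  have hE := add_mul_add_mul_mul_eq_zero_of_perturbation hb hδ hl hr
  linear_combination (norm := noncomm_ring) h * hr + hl * h + h * hE * h

end PerturbationAlgebra

theorem perturbed_homotopy_general {R L M : Type*} [CommRing R]
    [AddCommGroup L] [Module R L] [AddCommGroup M] [Module R M]
    (b h δ : Module.End R M)
    (i : L →ₗ[R] M) (p : M →ₗ[R] L)
    (hb : b * b = 0)
    (hip : (i ∘ₗ p : Module.End R M) = 1 + b * h + h * b)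
    (hδ : (b + δ) * (b + δ) = 0)
    (u : (Module.End R M)ˣ) (hu : (u : Module.End R M) = 1 - δ * h)
    (A : Module.End R M) (hA : A = (↑u⁻¹ : Module.End R M) * δ)
    (i₁ : L →ₗ[R] M) (hi₁ : i₁ = i + h ∘ₗ A ∘ₗ i)
    (p₁ : M →ₗ[R] L) (hp₁ : p₁ = p + p ∘ₗ A ∘ₗ h)
    (h₁ : Module.End R M) (hh₁ : h₁ = h + h * A * h) :
    (i₁ ∘ₗ p₁ : Module.End R M) = 1 + h₁ * (b + δ) + (b + δ) * h₁ := by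
  have hcomp : (i₁ ∘ₗ p₁ : Module.End R M) = (1 + h * A) * (i ∘ₗ p) * (1 + A * h) := by
    ext x
    simp only [hi₁, hp₁, LinearMap.comp_apply, LinearMap.add_apply, Module.End.mul_apply,
      Module.End.one_apply, map_add]
  have hl : A = δ + δ * h * A := hA ▸ u.inv_mul_eq_add_mul_mul_inv_mul hu
  have hr : A = δ + A * h * δ := hA ▸ u.inv_mul_eq_add_inv_mul_mul hu
  rw [hcomp, hip, hh₁]
  exact one_add_mul_mul_one_add_eq_of_perturbation hb hδ hl hr

/-- Main perturbation lemma: `h₁ = h + h∘A∘h` is a homotopy between `i₁ ∘ p₁` and `1`: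
`i₁ ∘ p₁ = 1 + h₁ ∘ (b + δ) + (b + δ) ∘ h₁`. -/
theorem perturbed_homotopy {R L M : Type*} [CommRing R]
    [AddCommGroup L] [Module R L] [AddCommGroup M] [Module R M]
    (b h δ : Module.End R M) (bL : Module.End R L)
    (i : L →ₗ[R] M) (p : M →ₗ[R] L)
    (hbL : bL * bL = 0) (hb : b * b = 0)
    (hip : (i ∘ₗ p : Module.End R M) = 1 + b * h + h * b)
    (hi : i ∘ₗ bL = b ∘ₗ i) (hp : bL ∘ₗ p = p ∘ₗ b)
    (hδ : (b + δ) * (b + δ) = 0)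
    (u : (Module.End R M)ˣ) (hu : (u : Module.End R M) = 1 - δ * h)
    (A : Module.End R M) (hA : A = (↑u⁻¹ : Module.End R M) * δ)
    (i₁ : L →ₗ[R] M) (hi₁ : i₁ = i + h ∘ₗ A ∘ₗ i)
    (p₁ : M →ₗ[R] L) (hp₁ : p₁ = p + p ∘ₗ A ∘ₗ h)
    (h₁ : Module.End R M) (hh₁ : h₁ = h + h * A * h) :
    (i₁ ∘ₗ p₁ : Module.End R M) = 1 + h₁ * (b + δ) + (b + δ) * h₁ :=
  perturbed_homotopy_general b h δ i p hb hip hδ u hu A hA i₁ hi₁ p₁ hp₁ h₁ hh₁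
end

section
/- If (M, b) is a contractible complex with contraction h satisfying h∘b + b∘h + 1 = 0, and δ is a perturbation with (b + δ)² = 0 such that (1 - δ∘h) is invertible, then H = h ∘ (1 - δ∘h)⁻¹ satisfies H ∘ (b + δ) + (b + δ) ∘ H + 1 = 0; in particular (M, b + δ) is contractible. -/
/-!
Write `D = b + δ` and `H = h v` with `v = (1 - δ h)⁻¹`. Since `(1 - h δ) h = h (1 - δ h)`,
conjugating `H D + D H + 1` by `1 - h δ` on the left and `1 - δ h` on the right removes `v`, and
the contraction identity for `b` collapses the result to `h (b² - D²) h = 0`. Both conjugating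
factors are invertible (`1 + H δ` inverts `1 - h δ` on the left), so `H D + D H + 1 = 0`.
-/

section PerturbedContraction

variable {A : Type*} [Ring A] {b h δ v : A}

theorem one_sub_mul_mul_mul_eq_of_mul_eq_one (hv : (1 - δ * h) * v = 1) :
    (1 - h * δ) * (h * v) = h := by
  calc (1 - h * δ) * (h * v) = h * ((1 - δ * h) * v) := by noncomm_ring
    _ = h := by rw [hv, mul_one]

theorem mul_mul_one_sub_mul_eq_of_mul_eq_one (hv : v * (1 - δ * h) = 1) : h * v * (1 - δ * h) = h := by
  rw [mul_assoc, hv, mul_one]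

theorem one_add_mul_mul_mul_one_sub_mul_eq_one (hv : v * (1 - δ * h) = 1) :
    (1 + h * v * δ) * (1 - h * δ) = 1 := by
  calc (1 + h * v * δ) * (1 - h * δ) = 1 - h * δ + h * (v * (1 - δ * h)) * δ := by noncomm_ring
    _ = 1 := by rw [hv, mul_one, sub_add_cancel]

theorem conj_perturbed_contraction (hc : h * b + b * h + 1 = 0)
    (hv₁ : (1 - δ * h) * v = 1) (hv₂ : v * (1 - δ * h) = 1) :
    (1 - h * δ) * (h * v * (b + δ) + (b + δ) * (h * v) + 1) * (1 - δ * h)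
      = h * (b * b - (b + δ) * (b + δ)) * h := by
  calc (1 - h * δ) * (h * v * (b + δ) + (b + δ) * (h * v) + 1) * (1 - δ * h)
        = (1 - h * δ) * (h * v) * (b + δ) * (1 - δ * h)
          + (1 - h * δ) * (b + δ) * (h * v * (1 - δ * h)) + (1 - h * δ) * (1 - δ * h) := by
          noncomm_ring
    _ = h * (b + δ) * (1 - δ * h) + (1 - h * δ) * (b + δ) * h + (1 - h * δ) * (1 - δ * h) := by
          rw [one_sub_mul_mul_mul_eq_of_mul_eq_one hv₁, mul_mul_one_sub_mul_eq_of_mul_eq_one hv₂]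
    _ = h * (b * b - (b + δ) * (b + δ)) * h := by
          linear_combination (norm := noncomm_ring) hc

theorem perturbed_contraction (hb : b * b = 0) (hc : h * b + b * h + 1 = 0)
    (hd : (b + δ) * (b + δ) = 0) (hv₁ : (1 - δ * h) * v = 1) (hv₂ : v * (1 - δ * h) = 1) :
    h * v * (b + δ) + (b + δ) * (h * v) + 1 = 0 := by
  set X := h * v * (b + δ) + (b + δ) * (h * v) + 1
  calc X = (1 + h * v * δ) * (1 - h * δ) * X * ((1 - δ * h) * v) := by
        rw [one_add_mul_mul_mul_one_sub_mul_eq_one hv₂, hv₁, one_mul, mul_one]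
    _ = (1 + h * v * δ) * ((1 - h * δ) * X * (1 - δ * h)) * v := by noncomm_ring
    _ = 0 := by
        rw [conj_perturbed_contraction hc hv₁ hv₂, hb, hd, sub_zero, mul_zero, zero_mul,
          mul_zero, zero_mul]

end PerturbedContraction

/-- Perturbing contractions: if `h∘b + b∘h + 1 = 0`, `(b+δ)² = 0` and `(1 - δ∘h)`
is invertible, then `H = h ∘ (1 - δ∘h)⁻¹` is a contraction for `b + δ`:
`H ∘ (b+δ) + (b+δ) ∘ H + 1 = 0`. -/
theorem perturbing_contractions {R M : Type*} [CommRing R] [AddCommGroup M] [Module R M]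
    (b h δ : Module.End R M)
    (hb : b * b = 0) (hcontr : h * b + b * h + 1 = 0)
    (hδ : (b + δ) * (b + δ) = 0)
    (u : (Module.End R M)ˣ) (hu : (u : Module.End R M) = 1 - δ * h)
    (H : Module.End R M) (hH : H = h * (↑u⁻¹ : Module.End R M)) :
    H * (b + δ) + (b + δ) * H + 1 = 0 := by
  subst hH
  exact perturbed_contraction hb hcontr hδ (hu ▸ u.mul_inv) (hu ▸ u.inv_mul)
end

section
/- Killing contractible complexes: given a chain complex on A ⊕ A' with differential d = [[α, β],[γ, δ]] such that d² = 0, and H : A' → A' with H∘δ + δ∘H = 1 and H∘H = 0 (or just H a contracting homotopy of (A', δ)), the map D = α - β ∘ H ∘ γ on A satisfies D ∘ D = 0. -/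
/-! Expanding `D² = α² - αβHγ - βHγα + βHγβHγ` and using `d² = 0` entrywise turns it into
`-βγ + β(δH + Hδ)γ - βHδ²Hγ`; the homotopy identity cancels the first two terms and `δ² = 0`
kills the last. -/

/-- Killing contractible complexes: if the block differential `d = [[α,β],[γ,δ]]`
on `A ⊕ A'` squares to zero, `(A', δ)` is a complex (`δ² = 0`) contracted by `H`
(`H∘δ + δ∘H = 1`), then `D = α - β∘H∘γ` satisfies `D ∘ D = 0`. -/
theorem killing_contractible_differential {R A A' : Type*} [CommRing R]
    [AddCommGroup A] [Module R A] [AddCommGroup A'] [Module R A']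
    (α : Module.End R A) (β : A' →ₗ[R] A) (γ : A →ₗ[R] A') (δ : Module.End R A')
    (h1 : α * α + β ∘ₗ γ = 0)
    (h2 : α ∘ₗ β + β ∘ₗ δ = 0)
    (h3 : γ ∘ₗ α + δ ∘ₗ γ = 0)
    (h4 : (γ ∘ₗ β : Module.End R A') + δ * δ = 0)
    (hδ : δ * δ = 0)
    (H : Module.End R A') (hH : H * δ + δ * H = 1) :
    (α - β ∘ₗ H ∘ₗ γ) * (α - β ∘ₗ H ∘ₗ γ) = 0 := by
  have hαα : α * α = -(β ∘ₗ γ) := eq_neg_of_add_eq_zero_left h1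
  have hαβ : α ∘ₗ β = -(β ∘ₗ δ) := eq_neg_of_add_eq_zero_left h2
  have hγα : γ ∘ₗ α = -(δ ∘ₗ γ) := eq_neg_of_add_eq_zero_left h3
  have hγβ : γ ∘ₗ β = 0 := by rwa [hδ, add_zero] at h4
  calc (α - β ∘ₗ H ∘ₗ γ) * (α - β ∘ₗ H ∘ₗ γ)
      = α * α - (α ∘ₗ β) ∘ₗ H ∘ₗ γ - β ∘ₗ H ∘ₗ (γ ∘ₗ α)
          + β ∘ₗ H ∘ₗ (γ ∘ₗ β) ∘ₗ H ∘ₗ γ := by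
        simp only [Module.End.mul_eq_comp, LinearMap.comp_sub, LinearMap.sub_comp,
          LinearMap.comp_assoc]
        abel
    _ = β ∘ₗ (H * δ + δ * H - 1) ∘ₗ γ := by
        rw [hαα, hαβ, hγα, hγβ]
        simp only [Module.End.mul_eq_comp, LinearMap.comp_sub, LinearMap.sub_comp,
          LinearMap.comp_add, LinearMap.add_comp, LinearMap.comp_neg, LinearMap.neg_comp,
          LinearMap.comp_zero, LinearMap.zero_comp, LinearMap.comp_assoc, Module.End.one_eq_id,
          LinearMap.id_comp]
        abel
    _ = 0 := by rw [hH, sub_self, LinearMap.zero_comp, LinearMap.comp_zero]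
end

section
/- If δ is a small perturbation of a homotopy equivalence data in which p ∘ i = 1 (a deformation retract), then the perturbed maps satisfy p₁ ∘ i₁ = 1 if and only if p ∘ (A∘h²∘A + A∘h + h∘A) ∘ i = 0. -/
theorem LinearMap.add_comp_add_eq_one_add_of_comp_eq_one {R L M : Type*} [CommRing R]
    [AddCommGroup L] [Module R L] [AddCommGroup M] [Module R M]
    {i : L →ₗ[R] M} {p : M →ₗ[R] L} (h A : Module.End R M)
    (hpi : (p ∘ₗ i : Module.End R L) = 1) :
    ((p + p ∘ₗ A ∘ₗ h) ∘ₗ (i + h ∘ₗ A ∘ₗ i) : Module.End R L) =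
      1 + p ∘ₗ (A * h * h * A + A * h + h * A) ∘ₗ i := by
  simp only [LinearMap.add_comp, LinearMap.comp_add, Module.End.mul_eq_comp,
    LinearMap.comp_assoc, hpi]
  abel

theorem perturbing_DR_iff_general {R L M : Type*} [CommRing R]
    [AddCommGroup L] [Module R L] [AddCommGroup M] [Module R M]
    (h : Module.End R M)
    (i : L →ₗ[R] M) (p : M →ₗ[R] L)
    (hpi : (p ∘ₗ i : Module.End R L) = 1)
    (A : Module.End R M)
    (i₁ : L →ₗ[R] M) (hi₁ : i₁ = i + h ∘ₗ A ∘ₗ i)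
    (p₁ : M →ₗ[R] L) (hp₁ : p₁ = p + p ∘ₗ A ∘ₗ h) :
    (p₁ ∘ₗ i₁ : Module.End R L) = 1 ↔
      p ∘ₗ (A * h * h * A + A * h + h * A) ∘ₗ i = 0 := by
  rw [hi₁, hp₁, LinearMap.add_comp_add_eq_one_add_of_comp_eq_one h A hpi]
  exact add_eq_left

/-- Perturbing deformation retracts: with `p ∘ i = 1`, the perturbed maps satisfy
`p₁ ∘ i₁ = 1` if and only if `p ∘ (A∘h²∘A + A∘h + h∘A) ∘ i = 0`. -/
theorem perturbing_DR_iff {R L M : Type*} [CommRing R]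
    [AddCommGroup L] [Module R L] [AddCommGroup M] [Module R M]
    (b h δ : Module.End R M) (bL : Module.End R L)
    (i : L →ₗ[R] M) (p : M →ₗ[R] L)
    (hbL : bL * bL = 0) (hb : b * b = 0)
    (hip : (i ∘ₗ p : Module.End R M) = 1 + b * h + h * b)
    (hpi : (p ∘ₗ i : Module.End R L) = 1)
    (hi : i ∘ₗ bL = b ∘ₗ i) (hp : bL ∘ₗ p = p ∘ₗ b)
    (hδ : (b + δ) * (b + δ) = 0)
    (u : (Module.End R M)ˣ) (hu : (u : Module.End R M) = 1 - δ * h)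
    (A : Module.End R M) (hA : A = (↑u⁻¹ : Module.End R M) * δ)
    (i₁ : L →ₗ[R] M) (hi₁ : i₁ = i + h ∘ₗ A ∘ₗ i)
    (p₁ : M →ₗ[R] L) (hp₁ : p₁ = p + p ∘ₗ A ∘ₗ h) :
    (p₁ ∘ₗ i₁ : Module.End R L) = 1 ↔
      p ∘ₗ (A * h * h * A + A * h + h * A) ∘ₗ i = 0 :=
  perturbing_DR_iff_general h i p hpi A i₁ hi₁ p₁ hp₁
end

section
/- If the initial data is a special deformation retract (p∘i = 1, h∘i = 0, p∘h = 0, h∘h = 0) and δ is a small perturbation, then the perturbed data is again a special deformation retract: p₁∘i₁ = 1, h₁∘i₁ = 0, p₁∘h₁ = 0, h₁∘h₁ = 0. -/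
/-!
Each perturbed map differs from the original one by a correction that starts or ends with `h`:
`i₁ = i + h (A i)`, `p₁ = p + (p A) h`, `h₁ = h + h (A h)`. Hence `h i = 0`, `p h = 0` and
`h h = 0` already give `p₁ h = 0`, `h i₁ = 0` and `h h₁ = 0`, and expanding once more reduces
the four identities to these and to `p₁ i = p i = 1`.
-/

open LinearMap

section PerturbedRetract

variable {R L M : Type*} [Semiring R] [AddCommMonoid L] [Module R L] [AddCommMonoid M]
  [Module R M] (i : L →ₗ[R] M) (p : M →ₗ[R] L) (h A : Module.End R M)

def perturbedInclusion : L →ₗ[R] M := i + h ∘ₗ A ∘ₗ i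

def perturbedProjection : M →ₗ[R] L := p + p ∘ₗ A ∘ₗ h

def perturbedHomotopy : Module.End R M := h + h * A * h

variable {i p h}

theorem perturbedProjection_comp_inclusion (hhi : h ∘ₗ i = 0) :
    perturbedProjection p h A ∘ₗ i = p ∘ₗ i := by
  simp [perturbedProjection, add_comp, comp_assoc, hhi]

theorem perturbedProjection_comp_homotopy (hph : p ∘ₗ h = 0) (hhh : h * h = 0) :
    perturbedProjection p h A ∘ₗ h = 0 := by
  rw [Module.End.mul_eq_comp] at hhh
  simp [perturbedProjection, add_comp, comp_assoc, hph, hhh]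

theorem homotopy_comp_perturbedInclusion (hhi : h ∘ₗ i = 0) (hhh : h * h = 0) :
    h ∘ₗ perturbedInclusion i h A = 0 := by
  rw [Module.End.mul_eq_comp] at hhh
  simp [perturbedInclusion, comp_add, ← comp_assoc, hhi, hhh]

theorem homotopy_mul_perturbedHomotopy (hhh : h * h = 0) : h * perturbedHomotopy h A = 0 := by
  simp [perturbedHomotopy, mul_add, ← mul_assoc, hhh]

theorem perturbedProjection_comp_perturbedInclusion (hhi : h ∘ₗ i = 0) (hph : p ∘ₗ h = 0)
    (hhh : h * h = 0) :
    perturbedProjection p h A ∘ₗ perturbedInclusion i h A = p ∘ₗ i := by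
  rw [perturbedInclusion, comp_add, ← comp_assoc, perturbedProjection_comp_homotopy A hph hhh,
    zero_comp, add_zero, perturbedProjection_comp_inclusion A hhi]

theorem perturbedHomotopy_comp_perturbedInclusion (hhi : h ∘ₗ i = 0) (hhh : h * h = 0) :
    perturbedHomotopy h A ∘ₗ perturbedInclusion i h A = 0 := by
  rw [perturbedHomotopy, add_comp, Module.End.mul_eq_comp, comp_assoc,
    homotopy_comp_perturbedInclusion A hhi hhh, comp_zero, add_zero]

theorem perturbedProjection_comp_perturbedHomotopy (hph : p ∘ₗ h = 0) (hhh : h * h = 0) :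
    perturbedProjection p h A ∘ₗ perturbedHomotopy h A = 0 := by
  rw [perturbedHomotopy, comp_add, Module.End.mul_eq_comp, Module.End.mul_eq_comp,
    ← comp_assoc, ← comp_assoc, perturbedProjection_comp_homotopy A hph hhh, zero_comp, zero_comp,
    add_zero]

theorem perturbedHomotopy_mul_self (hhh : h * h = 0) :
    perturbedHomotopy h A * perturbedHomotopy h A = 0 := by
  nth_rw 1 [perturbedHomotopy]
  rw [add_mul, mul_assoc (h * A), homotopy_mul_perturbedHomotopy A hhh, mul_zero, add_zero]

end PerturbedRetract

theorem perturbing_special_DR_general {R L M : Type*} [CommRing R]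
    [AddCommGroup L] [Module R L] [AddCommGroup M] [Module R M]
    (h : Module.End R M)
    (i : L →ₗ[R] M) (p : M →ₗ[R] L)
    (hpi : (p ∘ₗ i : Module.End R L) = 1)
    (hhi : h ∘ₗ i = 0) (hph : p ∘ₗ h = 0) (hhh : h * h = 0)
    (A : Module.End R M)
    (i₁ : L →ₗ[R] M) (hi₁ : i₁ = i + h ∘ₗ A ∘ₗ i)
    (p₁ : M →ₗ[R] L) (hp₁ : p₁ = p + p ∘ₗ A ∘ₗ h)
    (h₁ : Module.End R M) (hh₁ : h₁ = h + h * A * h) :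
    (p₁ ∘ₗ i₁ : Module.End R L) = 1 ∧ h₁ ∘ₗ i₁ = 0 ∧ p₁ ∘ₗ h₁ = 0 ∧ h₁ * h₁ = 0 := by
  change i₁ = perturbedInclusion i h A at hi₁
  change p₁ = perturbedProjection p h A at hp₁
  change h₁ = perturbedHomotopy h A at hh₁
  subst hi₁ hp₁ hh₁
  exact ⟨(perturbedProjection_comp_perturbedInclusion A hhi hph hhh).trans hpi,
    perturbedHomotopy_comp_perturbedInclusion A hhi hhh,
    perturbedProjection_comp_perturbedHomotopy A hph hhh,
    perturbedHomotopy_mul_self A hhh⟩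

/-- Perturbing special deformation retracts: if `p∘i = 1`, `h∘i = 0`, `p∘h = 0`,
`h∘h = 0` and `δ` is a small perturbation, then the perturbed data is again a
special deformation retract. -/
theorem perturbing_special_DR {R L M : Type*} [CommRing R]
    [AddCommGroup L] [Module R L] [AddCommGroup M] [Module R M]
    (b h δ : Module.End R M) (bL : Module.End R L)
    (i : L →ₗ[R] M) (p : M →ₗ[R] L)
    (hbL : bL * bL = 0) (hb : b * b = 0)
    (hip : (i ∘ₗ p : Module.End R M) = 1 + b * h + h * b)
    (hpi : (p ∘ₗ i : Module.End R L) = 1)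
    (hchain_i : i ∘ₗ bL = b ∘ₗ i) (hchain_p : bL ∘ₗ p = p ∘ₗ b)
    (hhi : h ∘ₗ i = 0) (hph : p ∘ₗ h = 0) (hhh : h * h = 0)
    (hδ : (b + δ) * (b + δ) = 0)
    (u : (Module.End R M)ˣ) (hu : (u : Module.End R M) = 1 - δ * h)
    (A : Module.End R M) (hA : A = (↑u⁻¹ : Module.End R M) * δ)
    (i₁ : L →ₗ[R] M) (hi₁ : i₁ = i + h ∘ₗ A ∘ₗ i)
    (p₁ : M →ₗ[R] L) (hp₁ : p₁ = p + p ∘ₗ A ∘ₗ h)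
    (h₁ : Module.End R M) (hh₁ : h₁ = h + h * A * h) :
    (p₁ ∘ₗ i₁ : Module.End R L) = 1 ∧ h₁ ∘ₗ i₁ = 0 ∧ p₁ ∘ₗ h₁ = 0 ∧ h₁ * h₁ = 0 :=
  perturbing_special_DR_general h i p hpi hhi hph hhh A i₁ hi₁ p₁ hp₁ h₁ hh₁
end

section
/- Let (C, b) be a cochain complex of normed spaces with a contraction h in degree k (bh + hb + 1 = 0 on C^k) where h is bounded linear, and let δ be a perturbation ((b+δ)² = 0) such that the operator norm of δ∘h on C^k and C^{k+1} is strictly less than 1. Then H = h ∘ (1 - δ∘h)⁻¹ (defined via the geometric series) satisfies (b+δ)H + H(b+δ) + 1 = 0 on C^k, hence H^k(C, b+δ) = 0. -/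
/-!
Write `A = δ∘h` on `C^k` and `B = δ∘h` on `C^{k+1}`. Since `b² = 0` and `(b+δ)² = 0`, the
contraction identity gives the intertwining relation `(b+δ)(1 - A) = (1 - B) b`. Hence, for
`G = (b+δ)H + H(b+δ) + 1`, the factors `(1 - A)⁻¹` and `(1 - B)⁻¹` cancel in `G (1 - A)`, which
collapses to `(b+δ)h + hb + 1 - δh = bh + hb + 1 = 0`; so `G = 0` as soon as `1 - A` and `1 - B`
are invertible, which the Neumann series guarantees when `‖A‖, ‖B‖ < 1`.
-/

open ContinuousLinearMap

section Algebra

variable {R : Type*} [Ring R]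
  {M₀ M₁ M₂ : Type*}
  [TopologicalSpace M₀] [AddCommGroup M₀] [Module R M₀]
  [TopologicalSpace M₁] [AddCommGroup M₁] [Module R M₁]
  [TopologicalSpace M₂] [AddCommGroup M₂] [Module R M₂]

theorem perturbed_comp_one_sub_eq [IsTopologicalAddGroup M₁] [IsTopologicalAddGroup M₂]
    {b₀₁ δ₀₁ : M₀ →L[R] M₁} {b₁₂ δ₁₂ : M₁ →L[R] M₂} {h₁₀ : M₁ →L[R] M₀} {h₂₁ : M₂ →L[R] M₁}
    (hbb : b₁₂ ∘L b₀₁ = 0) (hδδ : (b₁₂ + δ₁₂) ∘L (b₀₁ + δ₀₁) = 0)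
    (hcontr : b₀₁ ∘L h₁₀ + h₂₁ ∘L b₁₂ + 1 = 0) :
    (b₁₂ + δ₁₂) ∘L (1 - δ₀₁ ∘L h₁₀) = (1 - δ₁₂ ∘L h₂₁) ∘L b₁₂ := by
  have hδ : (b₁₂ + δ₁₂) ∘L δ₀₁ = -(δ₁₂ ∘L b₀₁) := by
    rw [comp_add, add_comp, hbb, zero_add] at hδδ
    exact eq_neg_of_add_eq_zero_right hδδ
  have hbh : b₀₁ ∘L h₁₀ = -(h₂₁ ∘L b₁₂) - 1 := by
    linear_combination (norm := abel) hcontr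
  calc (b₁₂ + δ₁₂) ∘L (1 - δ₀₁ ∘L h₁₀)
      = b₁₂ + δ₁₂ - ((b₁₂ + δ₁₂) ∘L δ₀₁) ∘L h₁₀ := by rw [comp_sub, one_def, comp_id, comp_assoc]
    _ = b₁₂ + δ₁₂ + δ₁₂ ∘L (b₀₁ ∘L h₁₀) := by rw [hδ, neg_comp, sub_neg_eq_add, comp_assoc]
    _ = (1 - δ₁₂ ∘L h₂₁) ∘L b₁₂ := by
      simp only [hbh, sub_comp, one_def, id_comp, comp_sub, comp_neg, comp_id]
      abel

theorem perturbed_contraction_of_isUnit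
    [IsTopologicalAddGroup M₁] [IsTopologicalAddGroup M₂]
    {b₀₁ δ₀₁ : M₀ →L[R] M₁} {b₁₂ δ₁₂ : M₁ →L[R] M₂} {h₁₀ : M₁ →L[R] M₀} {h₂₁ : M₂ →L[R] M₁}
    (hbb : b₁₂ ∘L b₀₁ = 0) (hδδ : (b₁₂ + δ₁₂) ∘L (b₀₁ + δ₀₁) = 0)
    (hcontr : b₀₁ ∘L h₁₀ + h₂₁ ∘L b₁₂ + 1 = 0)
    (hA : IsUnit (1 - δ₀₁ ∘L h₁₀)) (hB : IsUnit (1 - δ₁₂ ∘L h₂₁)) :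
    (b₀₁ + δ₀₁) ∘L (h₁₀ ∘L Ring.inverse (1 - δ₀₁ ∘L h₁₀)) +
      (h₂₁ ∘L Ring.inverse (1 - δ₁₂ ∘L h₂₁)) ∘L (b₁₂ + δ₁₂) + 1 = 0 := by
  set A := δ₀₁ ∘L h₁₀
  set G := (b₀₁ + δ₀₁) ∘L (h₁₀ ∘L Ring.inverse (1 - A)) +
    (h₂₁ ∘L Ring.inverse (1 - δ₁₂ ∘L h₂₁)) ∘L (b₁₂ + δ₁₂) + 1
  have hGA : G ∘L (1 - A) = 0 := by
    have hXA : Ring.inverse (1 - A) ∘L (1 - A) = 1 := Ring.inverse_mul_cancel _ hA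
    have hYB : Ring.inverse (1 - δ₁₂ ∘L h₂₁) ∘L (1 - δ₁₂ ∘L h₂₁) = 1 :=
      Ring.inverse_mul_cancel _ hB
    have hdH : ((b₀₁ + δ₀₁) ∘L (h₁₀ ∘L Ring.inverse (1 - A))) ∘L (1 - A) =
        (b₀₁ + δ₀₁) ∘L h₁₀ := by
      rw [comp_assoc, comp_assoc, hXA, one_def, comp_id]
    have hHd : ((h₂₁ ∘L Ring.inverse (1 - δ₁₂ ∘L h₂₁)) ∘L (b₁₂ + δ₁₂)) ∘L (1 - A) =
        h₂₁ ∘L b₁₂ := by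
      rw [comp_assoc, perturbed_comp_one_sub_eq hbb hδδ hcontr, comp_assoc, ← comp_assoc _ _ b₁₂,
        hYB, one_def, id_comp]
    calc G ∘L (1 - A)
        = (b₀₁ + δ₀₁) ∘L h₁₀ + h₂₁ ∘L b₁₂ + (1 - A) := by
          rw [add_comp, add_comp, hdH, hHd, one_def, id_comp]
      _ = b₀₁ ∘L h₁₀ + h₂₁ ∘L b₁₂ + 1 := by rw [add_comp]; abel
      _ = 0 := hcontr
  calc G = G ∘L ((1 - A) * Ring.inverse (1 - A)) := by
        rw [Ring.mul_inverse_cancel _ hA, one_def, comp_id]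
    _ = 0 := by rw [mul_def, ← comp_assoc, hGA, zero_comp]

theorem exists_apply_eq_of_comp_add_comp_add_one_eq_zero [ContinuousAdd M₁]
    {d₀ : M₀ →L[R] M₁} {d₁ : M₁ →L[R] M₂} {H₁₀ : M₁ →L[R] M₀} {H₂₁ : M₂ →L[R] M₁}
    (hH : d₀ ∘L H₁₀ + H₂₁ ∘L d₁ + 1 = 0) {v : M₁} (hv : d₁ v = 0) : ∃ w, d₀ w = v := by
  refine ⟨-H₁₀ v, ?_⟩
  have hHv := congr($hH v)
  simp only [add_apply, comp_apply, hv, map_zero, add_zero, one_apply_eq_self, zero_apply] at hHv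
  rw [map_neg, neg_eq_iff_add_eq_zero, hHv]

end Algebra

theorem banach_perturbed_contraction_general
    {C0 C1 C2 : Type*}
    [NormedAddCommGroup C0] [NormedSpace ℝ C0]
    [NormedAddCommGroup C1] [NormedSpace ℝ C1] [CompleteSpace C1]
    [NormedAddCommGroup C2] [NormedSpace ℝ C2] [CompleteSpace C2]
    (b01 : C0 →L[ℝ] C1) (b12 : C1 →L[ℝ] C2)
    (δ01 : C0 →L[ℝ] C1) (δ12 : C1 →L[ℝ] C2)
    (h10 : C1 →L[ℝ] C0) (h21 : C2 →L[ℝ] C1)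
    (hbb : b12.comp b01 = 0)
    (hδδ : (b12 + δ12).comp (b01 + δ01) = 0)
    (hcontr : b01.comp h10 + h21.comp b12 + 1 = 0)
    (hsmall1 : ‖δ01.comp h10‖ < 1) (hsmall2 : ‖δ12.comp h21‖ < 1)
    (H10 : C1 →L[ℝ] C0) (hH10 : H10 = h10.comp (Ring.inverse (1 - δ01.comp h10)))
    (H21 : C2 →L[ℝ] C1) (hH21 : H21 = h21.comp (Ring.inverse (1 - δ12.comp h21))) :
    ((b01 + δ01).comp H10 + H21.comp (b12 + δ12) + 1 = 0) ∧
    (∀ v : C1, (b12 + δ12) v = 0 → ∃ w : C0, (b01 + δ01) w = v) := by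
  subst hH10 hH21
  have hH := perturbed_contraction_of_isUnit hbb hδδ hcontr
    (isUnit_one_sub_of_norm_lt_one hsmall1) (isUnit_one_sub_of_norm_lt_one hsmall2)
  exact ⟨hH, fun _ hv ↦ exists_apply_eq_of_comp_add_comp_add_one_eq_zero hH hv⟩

/-- Perturbing a contraction in degree `k` of a complex of Banach spaces: if
`b∘h + h∘b + 1 = 0` on `C^k` and `‖δ∘h‖ < 1` on `C^k` and `C^{k+1}`, then
`H = h ∘ (1 - δ∘h)⁻¹` is a contraction in degree `k` for `b + δ`; in particular
the cohomology of `(C, b+δ)` in degree `k` vanishes. Here `C0 = C^{k-1}`,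
`C1 = C^k`, `C2 = C^{k+1}`. -/
theorem banach_perturbed_contraction
    {C0 C1 C2 : Type*}
    [NormedAddCommGroup C0] [NormedSpace ℝ C0] [CompleteSpace C0]
    [NormedAddCommGroup C1] [NormedSpace ℝ C1] [CompleteSpace C1]
    [NormedAddCommGroup C2] [NormedSpace ℝ C2] [CompleteSpace C2]
    (b01 : C0 →L[ℝ] C1) (b12 : C1 →L[ℝ] C2)
    (δ01 : C0 →L[ℝ] C1) (δ12 : C1 →L[ℝ] C2)
    (h10 : C1 →L[ℝ] C0) (h21 : C2 →L[ℝ] C1)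
    (hbb : b12.comp b01 = 0)
    (hδδ : (b12 + δ12).comp (b01 + δ01) = 0)
    (hcontr : b01.comp h10 + h21.comp b12 + 1 = 0)
    (hsmall1 : ‖δ01.comp h10‖ < 1) (hsmall2 : ‖δ12.comp h21‖ < 1)
    (H10 : C1 →L[ℝ] C0) (hH10 : H10 = h10.comp (Ring.inverse (1 - δ01.comp h10)))
    (H21 : C2 →L[ℝ] C1) (hH21 : H21 = h21.comp (Ring.inverse (1 - δ12.comp h21))) :
    ((b01 + δ01).comp H10 + H21.comp (b12 + δ12) + 1 = 0) ∧
    (∀ v : C1, (b12 + δ12) v = 0 → ∃ w : C0, (b01 + δ01) w = v) :=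
  banach_perturbed_contraction_general b01 b12 δ01 δ12 h10 h21 hbb hδδ hcontr hsmall1 hsmall2 H10
    hH10 H21 hH21
end
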